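/- arXiv:2504.14057 — 7 statements merged into one kernel-verified Lean document; each statement's English description precedes it below -/
import Mathlib

section
/- Let H be a Hilbert space and let G, K, L be closed subspaces with orthogonal projections p_G, p_K, p_L. Then the following are equivalent: (1) the images of G and L under the projection onto K^⊥ are orthogonal; (2) p_G ∘ p_K ∘ p_L = p_G ∘ p_L; (3) p_L ∘ p_K ∘ p_G = p_L ∘ p_G. -/
/-!
Write `P = p_{K^⊥} = 1 - p_K`. Being a self-adjoint idempotent, `P` satisfies
`⟪P x, P y⟫ = ⟪x, P y⟫`, and this vanishes for all `x ∈ G`, `y ∈ L` exactly when the compression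
`p_G P p_L = p_G p_L - p_G p_K p_L` is zero, which is (2). Taking adjoints turns (2) into (3).
-/

/-- The orthogonal projection onto a closed subspace, as an operator `H →L[ℂ] H`. -/
noncomputable def orthProj {H : Type*} [NormedAddCommGroup H] [InnerProductSpace ℂ H]
    [CompleteSpace H] (K : Submodule ℂ H) (hK : IsClosed (K : Set H)) : H →L[ℂ] H :=
  haveI : CompleteSpace K := hK.completeSpace_coe
  K.subtypeL.comp (K.orthogonalProjection)

theorem IsSelfAdjoint.mul_mul_eq_mul_iff {R : Type*} [Semigroup R] [StarMul R] {a b c : R}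
    (ha : IsSelfAdjoint a) (hb : IsSelfAdjoint b) (hc : IsSelfAdjoint c) :
    a * (b * c) = a * c ↔ c * (b * a) = c * a := by
  rw [← star_injective.eq_iff]
  simp only [star_mul, ha.star_eq, hb.star_eq, hc.star_eq, mul_assoc]

namespace Submodule

variable {𝕜 E : Type*} [RCLike 𝕜] [NormedAddCommGroup E] [InnerProductSpace 𝕜 E]
  (U V W : Submodule 𝕜 E) [U.HasOrthogonalProjection] [V.HasOrthogonalProjection]
  [W.HasOrthogonalProjection]

local notation "⟪" x ", " y "⟫" => inner 𝕜 x y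

theorem starProjection_comp_comp_starProjection_eq_zero_iff (T : E →L[𝕜] E) :
    U.starProjection ∘L T ∘L W.starProjection = 0 ↔ ∀ x ∈ U, ∀ y ∈ W, ⟪x, T y⟫ = 0 := by
  constructor
  · intro h x hx y hy
    rw [← starProjection_eq_self_iff.mpr hx, ← starProjection_eq_self_iff.mpr hy,
      inner_starProjection_left_eq_right]
    simp [← ContinuousLinearMap.comp_apply, h]
  · intro h
    ext z
    refine ext_inner_left 𝕜 fun v => ?_
    rw [ContinuousLinearMap.comp_apply, ContinuousLinearMap.comp_apply,
      ← inner_starProjection_left_eq_right]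
    simpa using h _ (U.starProjection_apply_mem v) _ (W.starProjection_apply_mem z)

theorem inner_starProjection_starProjection (x y : E) :
    ⟪V.starProjection x, V.starProjection y⟫ = ⟪x, V.starProjection y⟫ := by
  rw [inner_starProjection_left_eq_right,
    starProjection_eq_self_iff.mpr (V.starProjection_apply_mem y)]

theorem inner_starProjection_orthogonal_eq_zero_iff :
    (∀ x ∈ U, ∀ y ∈ W, ⟪Vᗮ.starProjection x, Vᗮ.starProjection y⟫ = 0) ↔
      U.starProjection ∘L V.starProjection ∘L W.starProjection =
        U.starProjection ∘L W.starProjection := by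
  have hcomp : U.starProjection ∘L Vᗮ.starProjection ∘L W.starProjection =
      U.starProjection ∘L W.starProjection - U.starProjection ∘L V.starProjection ∘L
        W.starProjection := by
    rw [starProjection_orthogonal, ContinuousLinearMap.sub_comp, ContinuousLinearMap.comp_sub,
      ContinuousLinearMap.id_comp]
  simp_rw [inner_starProjection_starProjection]
  rw [← starProjection_comp_comp_starProjection_eq_zero_iff, hcomp, sub_eq_zero, eq_comm]

end Submodule

theorem orthProj_eq_starProjection {H : Type*} [NormedAddCommGroup H] [InnerProductSpace ℂ H]
    [CompleteSpace H] (K : Submodule ℂ H) (hK : IsClosed (K : Set H))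
    [K.HasOrthogonalProjection] : orthProj K hK = K.starProjection :=
  rfl

/-- Equivalence of the three characterizations of conditional orthogonality of
closed subspaces `G`, `L` over `K`. -/
theorem conditional_orthogonality_tfae
    {H : Type*} [NormedAddCommGroup H] [InnerProductSpace ℂ H] [CompleteSpace H]
    (G K L : Submodule ℂ H)
    (hG : IsClosed (G : Set H)) (hK : IsClosed (K : Set H)) (hL : IsClosed (L : Set H)) :
    ((∀ x ∈ G, ∀ y ∈ L,
        (inner ℂ (orthProj Kᗮ K.isClosed_orthogonal x) (orthProj Kᗮ K.isClosed_orthogonal y) : ℂ)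
          = 0) ↔
      (orthProj G hG).comp ((orthProj K hK).comp (orthProj L hL))
        = (orthProj G hG).comp (orthProj L hL)) ∧
    ((∀ x ∈ G, ∀ y ∈ L,
        (inner ℂ (orthProj Kᗮ K.isClosed_orthogonal x) (orthProj Kᗮ K.isClosed_orthogonal y) : ℂ)
          = 0) ↔
      (orthProj L hL).comp ((orthProj K hK).comp (orthProj G hG))
        = (orthProj L hL).comp (orthProj G hG)) := by
  have : CompleteSpace G := hG.completeSpace_coe
  have : CompleteSpace K := hK.completeSpace_coe
  have : CompleteSpace L := hL.completeSpace_coe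
  simp only [orthProj_eq_starProjection]
  have h12 := G.inner_starProjection_orthogonal_eq_zero_iff K L
  refine ⟨h12, h12.trans ?_⟩
  simpa only [ContinuousLinearMap.mul_def] using
    (isSelfAdjoint_starProjection G).mul_mul_eq_mul_iff (isSelfAdjoint_starProjection K)
      (isSelfAdjoint_starProjection L)
end

section
/- Let G be a closed subgroup of Sym(Ω) for Ω countably infinite, acting without fixed points on Ω. Suppose that for every open subgroup V ≤ G there exists a unique finite subset A ⊆ Ω with G_A ≤ V ≤ G_{A} (setwise stabilizer). Then G has no algebraicity, i.e. for every finite A ⊆ Ω, every orbit of the pointwise stabilizer G_A on Ω \ A is infinite. -/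
/-! The pointwise stabilizer `V = G ∩ G_A` is open and lies between the pointwise and setwise
stabilizers of `A`. If the `V`-orbit `O` of some `b ∉ A` were finite, then `V` would also stabilize
`A ∪ O` setwise while still containing `G ∩ G_{A ∪ O}`, so uniqueness forces `A ∪ O = A`,
although `b ∈ O`. -/

open Topology

/-- The topology of pointwise convergence on the permutation group of a (discrete) set. -/
noncomputable def permTopology (Ω : Type*) : TopologicalSpace (Equiv.Perm Ω) :=
  letI : TopologicalSpace Ω := ⊥
  TopologicalSpace.induced
    (fun g => ((g : Ω → Ω), ((g⁻¹ : Equiv.Perm Ω) : Ω → Ω))) inferInstance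

/-- The subgroup of permutations fixing every point of a finite set `A`. -/
def fixSubgroup {Ω : Type*} (A : Finset Ω) : Subgroup (Equiv.Perm Ω) where
  carrier := {g | ∀ a ∈ A, g a = a}
  one_mem' := by intro a _; simp
  mul_mem' := by
    intro g h hg hh a ha
    simp [Equiv.Perm.mul_apply, hh a ha, hg a ha]
  inv_mem' := by
    intro g hg a ha
    have h1 := hg a ha
    calc (g⁻¹ : Equiv.Perm Ω) a = g⁻¹ (g a) := by rw [h1]
    _ = a := g.symm_apply_apply a

/-- The subgroup of permutations stabilizing a finite set `A` setwise. -/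
def setwiseStab {Ω : Type*} (A : Finset Ω) : Subgroup (Equiv.Perm Ω) where
  carrier := {g | ∀ a : Ω, a ∈ A ↔ g a ∈ A}
  one_mem' := by intro a; simp
  mul_mem' := by
    intro g h hg hh a
    rw [hh a, hg (h a)]
    simp [Equiv.Perm.mul_apply]
  inv_mem' := by
    intro g hg a
    have := hg ((g⁻¹ : Equiv.Perm Ω) a)
    rw [show g ((g⁻¹ : Equiv.Perm Ω) a) = a from g.apply_symm_apply a] at this
    exact this.symm

open Equiv

section

variable {Ω : Type*}

@[simp]
lemma mem_fixSubgroup {A : Finset Ω} {g : Perm Ω} : g ∈ fixSubgroup A ↔ ∀ a ∈ A, g a = a :=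
  Iff.rfl

lemma fixSubgroup_antitone {A B : Finset Ω} (h : A ⊆ B) : fixSubgroup B ≤ fixSubgroup A :=
  fun _ hg a ha => hg a (h ha)

lemma fixSubgroup_le_setwiseStab (A : Finset Ω) : fixSubgroup A ≤ setwiseStab A := by
  intro g hg a
  refine ⟨fun ha => (hg a ha).symm ▸ ha, fun hga => ?_⟩
  rwa [← g.injective (hg (g a) hga)]

lemma le_setwiseStab_union [DecidableEq Ω] {V : Subgroup (Perm Ω)} {A B : Finset Ω}
    (hA : V ≤ setwiseStab A) (hB : V ≤ setwiseStab B) : V ≤ setwiseStab (A ∪ B) := by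
  intro g hg a
  simp only [Finset.mem_union, hA hg a, hB hg a]

lemma le_setwiseStab_of_orbit_finite (V : Subgroup (Perm Ω)) (b : Ω)
    (h : {x : Ω | ∃ g ∈ V, g b = x}.Finite) : V ≤ setwiseStab h.toFinset := by
  intro g hg a
  simp only [Set.Finite.mem_toFinset, Set.mem_ofPred_eq]
  constructor
  · rintro ⟨k, hk, rfl⟩
    exact ⟨g * k, V.mul_mem hg hk, rfl⟩
  · rintro ⟨k, hk, hkb⟩
    exact ⟨g⁻¹ * k, V.mul_mem (V.inv_mem hg) hk, by simp [Perm.mul_apply, hkb]⟩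

lemma isOpen_fixSubgroup (A : Finset Ω) :
    IsOpen[permTopology Ω] (fixSubgroup A : Set (Perm Ω)) := by
  let : TopologicalSpace Ω := ⊥
  have : DiscreteTopology Ω := ⟨rfl⟩
  let := permTopology Ω
  have hpair : Continuous fun g : Perm Ω => ((g : Ω → Ω), ((g⁻¹ : Perm Ω) : Ω → Ω)) :=
    continuous_induced_dom
  have heval (a : Ω) : Continuous fun g : Perm Ω => g a :=
    (continuous_apply a).comp (continuous_fst.comp hpair)
  have hfix : (fixSubgroup A : Set (Perm Ω)) = ⋂ a ∈ A, (fun g : Perm Ω => g a) ⁻¹' {a} := by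
    ext g
    simp
  rw [hfix]
  exact isOpen_biInter_finset fun a _ => (heval a).isOpen_preimage _ (isOpen_discrete _)

end

theorem no_algebraicity_of_open_subgroups_between_stabilizers_general
    (Ω : Type*) (G : Subgroup (Equiv.Perm Ω))
    (hyp : ∀ V : Subgroup (Equiv.Perm Ω), V ≤ G →
      (∃ U : Set (Equiv.Perm Ω), IsOpen[permTopology Ω] U ∧ (V : Set (Equiv.Perm Ω)) = U ∩ G) →
      ∃! A : Finset Ω, G ⊓ fixSubgroup A ≤ V ∧ V ≤ G ⊓ setwiseStab A) :
    ∀ (A : Finset Ω) (b : Ω), b ∉ A →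
      {x : Ω | ∃ g ∈ G ⊓ fixSubgroup A, g b = x}.Infinite := by
  classical
  intro A b hb hfin
  set V := G ⊓ fixSubgroup A
  have hVopen : ∃ U : Set (Perm Ω), IsOpen[permTopology Ω] U ∧ (V : Set (Perm Ω)) = U ∩ G :=
    ⟨_, isOpen_fixSubgroup A, by rw [Subgroup.coe_inf, Set.inter_comm]⟩
  obtain ⟨B, -, huniq⟩ := hyp V inf_le_left hVopen
  set O := hfin.toFinset
  have hA : G ⊓ fixSubgroup A ≤ V ∧ V ≤ G ⊓ setwiseStab A :=
    ⟨le_rfl, inf_le_inf_left G (fixSubgroup_le_setwiseStab A)⟩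
  have hAO : G ⊓ fixSubgroup (A ∪ O) ≤ V ∧ V ≤ G ⊓ setwiseStab (A ∪ O) :=
    ⟨inf_le_inf_left G (fixSubgroup_antitone Finset.subset_union_left),
      le_inf inf_le_left <| le_setwiseStab_union
        (inf_le_right.trans (fixSubgroup_le_setwiseStab A))
        (le_setwiseStab_of_orbit_finite V b hfin)⟩
  have hbO : b ∈ O := hfin.mem_toFinset.2 ⟨1, V.one_mem, rfl⟩
  have hAO_eq : A ∪ O = A := (huniq _ hAO).trans (huniq _ hA).symm
  exact hb (hAO_eq ▸ Finset.mem_union_right A hbO)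

/-- If every open subgroup of a fixed-point-free closed permutation group `G` lies between the
pointwise and the setwise stabilizer of a unique finite set, then `G` has no algebraicity. -/
theorem no_algebraicity_of_open_subgroups_between_stabilizers
    (Ω : Type*) [Countable Ω] [Infinite Ω] (G : Subgroup (Equiv.Perm Ω))
    (hGcl : IsClosed[permTopology Ω] (G : Set (Equiv.Perm Ω)))
    (hnofix : ¬ ∃ ω : Ω, ∀ g ∈ G, g ω = ω)
    (hyp : ∀ V : Subgroup (Equiv.Perm Ω), V ≤ G →
      (∃ U : Set (Equiv.Perm Ω), IsOpen[permTopology Ω] U ∧ (V : Set (Equiv.Perm Ω)) = U ∩ G) →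
      ∃! A : Finset Ω, G ⊓ fixSubgroup A ≤ V ∧ V ≤ G ⊓ setwiseStab A) :
    ∀ (A : Finset Ω) (b : Ω), b ∉ A →
      {x : Ω | ∃ g ∈ G ⊓ fixSubgroup A, g b = x}.Infinite :=
  no_algebraicity_of_open_subgroups_between_stabilizers_general Ω G hyp
end

section
/- Let G be a closed subgroup of Sym(Ω) acting without fixed points. If G has no algebraicity and weakly eliminates imaginaries, then for every open subgroup V ≤ G there exists a unique finite subset A ⊆ Ω such that G_A ≤ V ≤ G_{{A}}, where G_A is the pointwise and G_{{A}} the setwise stabilizer of A. -/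
open Topology

/-!
Weak elimination of imaginaries gives a finite `A` with `G_A ≤ V` of finite index, so every point
of `A` has a finite `V`-orbit, while by no algebraicity every point outside `A` already has an
infinite `G_A`-orbit. Hence `A` is the set of points with finite `V`-orbit, which `V` preserves.
For uniqueness, if `G_B ≤ V ≤ G_{C}` then the `G_B`-orbit of each `c ∈ C` stays in the finite set
`C`, so `c ∈ B` by no algebraicity.
-/

open MulAction

theorem MulAction.finite_orbit_of_relIndex_ne_zero {M α : Type*} [Group M] [MulAction M α]
    {H V : Subgroup M} (hHV : H.relIndex V ≠ 0) {a : α} (ha : ∀ h ∈ H, h • a = a) :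
    (orbit V a).Finite := by
  have hle : H.subgroupOf V ≤ stabilizer V a := fun h hh => ha h hh
  refine Set.finite_of_ncard_ne_zero ?_
  rw [← index_stabilizer]
  exact fun h0 => hHV (Nat.eq_zero_of_zero_dvd (h0 ▸ Subgroup.index_dvd_of_le hle))

theorem MulAction.orbit_subset_of_le {M α : Type*} [Group M] [MulAction M α]
    {H K : Subgroup M} (hHK : H ≤ K) (a : α) : orbit H a ⊆ orbit K a := by
  rintro _ ⟨g, rfl⟩
  exact ⟨⟨g, hHK g.2⟩, rfl⟩

theorem Equiv.Perm.orbit_subgroup_eq_setOf {Ω : Type*} (H : Subgroup (Equiv.Perm Ω)) (b : Ω) :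
    orbit H b = {x | ∃ g ∈ H, g b = x} := by
  ext x
  simp [mem_orbit_iff, Subgroup.smul_def, Equiv.Perm.smul_def]

theorem le_setwiseStab_of_orbit_finite_iff {Ω : Type*} {V : Subgroup (Equiv.Perm Ω)}
    {A : Finset Ω} (hA : ∀ a, a ∈ A ↔ (orbit V a).Finite) : V ≤ setwiseStab A := by
  intro v hv a
  rw [hA, hA, ← orbit_smul (⟨v, hv⟩ : V) a]
  rfl

theorem subset_of_le_setwiseStab {Ω : Type*} {H : Subgroup (Equiv.Perm Ω)} {B C : Finset Ω}
    (hinf : ∀ b ∉ B, (orbit H b).Infinite) (hC : H ≤ setwiseStab C) : C ⊆ B := by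
  intro c hc
  by_contra hcB
  refine hinf c hcB (C.finite_toSet.subset ?_)
  rintro _ ⟨h, rfl⟩
  exact (hC h.2 c).mp hc

theorem open_subgroups_between_stabilizers_of_noAlg_wei_general
    (Ω : Type*) (G : Subgroup (Equiv.Perm Ω))
    (hnoalg : ∀ (A : Finset Ω) (b : Ω), b ∉ A →
      {x : Ω | ∃ g ∈ G ⊓ fixSubgroup A, g b = x}.Infinite)
    (hwei : ∀ V : Subgroup (Equiv.Perm Ω), V ≤ G →
      (∃ U : Set (Equiv.Perm Ω), IsOpen[permTopology Ω] U ∧ (V : Set (Equiv.Perm Ω)) = U ∩ G) →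
      ∃ A : Finset Ω, G ⊓ fixSubgroup A ≤ V ∧ (G ⊓ fixSubgroup A).relIndex V ≠ 0) :
    ∀ V : Subgroup (Equiv.Perm Ω), V ≤ G →
      (∃ U : Set (Equiv.Perm Ω), IsOpen[permTopology Ω] U ∧ (V : Set (Equiv.Perm Ω)) = U ∩ G) →
      ∃! A : Finset Ω, G ⊓ fixSubgroup A ≤ V ∧ V ≤ G ⊓ setwiseStab A := by
  intro V hVG hVopen
  simp only [← Equiv.Perm.orbit_subgroup_eq_setOf] at hnoalg
  obtain ⟨A, hAV, hAindex⟩ := hwei V hVG hVopen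
  have hVA : V ≤ G ⊓ setwiseStab A := by
    refine le_inf hVG (le_setwiseStab_of_orbit_finite_iff fun a => ⟨fun ha => ?_, fun hfin => ?_⟩)
    · exact finite_orbit_of_relIndex_ne_zero hAindex fun g hg => hg.2 a ha
    · by_contra ha
      exact (hnoalg A a ha).mono (orbit_subset_of_le hAV a) hfin
  refine ⟨A, ⟨hAV, hVA⟩, fun B ⟨hBV, hVB⟩ => le_antisymm ?_ ?_⟩
  · exact subset_of_le_setwiseStab (hnoalg A) (hAV.trans (hVB.trans inf_le_right))
  · exact subset_of_le_setwiseStab (hnoalg B) (hBV.trans (hVA.trans inf_le_right))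

/-- If a fixed-point-free closed permutation group `G` has no algebraicity and weakly
eliminates imaginaries, then every open subgroup of `G` lies between the pointwise and the
setwise stabilizer of a unique finite subset. -/
theorem open_subgroups_between_stabilizers_of_noAlg_wei
    (Ω : Type*) [Countable Ω] [Infinite Ω] (G : Subgroup (Equiv.Perm Ω))
    (hGcl : IsClosed[permTopology Ω] (G : Set (Equiv.Perm Ω)))
    (hnofix : ¬ ∃ ω : Ω, ∀ g ∈ G, g ω = ω)
    (hnoalg : ∀ (A : Finset Ω) (b : Ω), b ∉ A →
      {x : Ω | ∃ g ∈ G ⊓ fixSubgroup A, g b = x}.Infinite)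
    (hwei : ∀ V : Subgroup (Equiv.Perm Ω), V ≤ G →
      (∃ U : Set (Equiv.Perm Ω), IsOpen[permTopology Ω] U ∧ (V : Set (Equiv.Perm Ω)) = U ∩ G) →
      ∃ A : Finset Ω, G ⊓ fixSubgroup A ≤ V ∧ (G ⊓ fixSubgroup A).relIndex V ≠ 0) :
    ∀ V : Subgroup (Equiv.Perm Ω), V ≤ G →
      (∃ U : Set (Equiv.Perm Ω), IsOpen[permTopology Ω] U ∧ (V : Set (Equiv.Perm Ω)) = U ∩ G) →
      ∃! A : Finset Ω, G ⊓ fixSubgroup A ≤ V ∧ V ≤ G ⊓ setwiseStab A :=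
  open_subgroups_between_stabilizers_of_noAlg_wei_general Ω G hnoalg hwei
end

section
/- Let G be a transitive closed subgroup of Sym(Ω) with no algebraicity and weak elimination of imaginaries. Then G is topologically simple: every closed normal subgroup of G is trivial or equal to G. -/
open Topology

/-! A nontrivial normal subgroup `N` has only infinite orbits: some `m ∈ N` moves a point `b`
(every point, by transitivity), and conjugating `m` by `G_b` moves `b` onto the infinite
`G_b`-orbit of `m b`. For finite `A`, the subgroup `N ⊔ G_A = N G_A` is open, so by weak
elimination of imaginaries it contains some `G_B` with finite index. Points of `B` would have
finite `N`-orbits, so `B = ∅` and `N G_A = G`: every `g ∈ G` agrees with some element of `N` on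
`A`. Thus `N` is dense in `G`, and a closed `N` is all of `G`. -/

open Equiv

lemma Subgroup.le_normalizer_of_forall_conj_mem {M : Type*} [Group M] {G N : Subgroup M}
    (h : ∀ g ∈ G, ∀ n ∈ N, g * n * g⁻¹ ∈ N) : G ≤ Subgroup.normalizer (N : Set M) := by
  refine fun g hg => Subgroup.mem_normalizer_iff.2 fun n => ⟨h g hg n, fun hn => ?_⟩
  simpa [mul_assoc] using h g⁻¹ (G.inv_mem hg) _ hn

section

variable {Ω : Type*}

namespace PermTopology

lemma isOpen_setOf_forall_apply_eq (A : Finset Ω) (p : Perm Ω) :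
    IsOpen[permTopology Ω] {q : Perm Ω | ∀ a ∈ A, q a = p a} := by
  let _ : TopologicalSpace Ω := ⊥
  have : DiscreteTopology Ω := ⟨rfl⟩
  have hbox : IsOpen ((A : Set Ω).pi (fun a => {p a}) ×ˢ (Set.univ : Set (Ω → Ω))) :=
    (isOpen_set_pi A.finite_toSet fun a _ => isOpen_discrete _).prod isOpen_univ
  have hA : {q : Perm Ω | ∀ a ∈ A, q a = p a} =
      (fun q : Perm Ω => ((q : Ω → Ω), ⇑q⁻¹)) ⁻¹'
        ((A : Set Ω).pi (fun a => {p a}) ×ˢ Set.univ) := by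
    ext q
    simp [Set.mem_pi]
  rw [hA]
  exact isOpen_induced hbox

lemma exists_finset_setOf_forall_apply_eq_subset {U : Set (Perm Ω)}
    (hU : IsOpen[permTopology Ω] U) {g : Perm Ω} (hg : g ∈ U) :
    ∃ A : Finset Ω, {q : Perm Ω | ∀ a ∈ A, q a = g a} ⊆ U := by
  classical
  let _ : TopologicalSpace Ω := ⊥
  have : DiscreteTopology Ω := ⟨rfl⟩
  obtain ⟨W, hW, rfl⟩ := isOpen_induced_iff.1 hU
  obtain ⟨W₁, W₂, hW₁, hW₂, hg₁, hg₂, hW⟩ := isOpen_prod_iff.1 hW _ _ hg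
  obtain ⟨I, u, hu, hIu⟩ := isOpen_pi_iff.1 hW₁ _ hg₁
  obtain ⟨J, v, hv, hJv⟩ := isOpen_pi_iff.1 hW₂ _ hg₂
  -- `q⁻¹` agrees with `g⁻¹` on `J` as soon as `q` agrees with `g` on `g⁻¹ '' J`
  refine ⟨I ∪ J.image ⇑g⁻¹, fun q hq => hW ⟨hIu fun i hi => ?_, hJv fun j hj => ?_⟩⟩
  · show q i ∈ u i
    rw [hq i (Finset.mem_union_left _ hi)]
    exact (hu i hi).2
  · have hqj : q⁻¹ j = g⁻¹ j := by
      rw [Perm.inv_eq_iff_eq, hq _ (Finset.mem_union_right _ (Finset.mem_image_of_mem _ hj))]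
      exact (g.apply_symm_apply j).symm
    show q⁻¹ j ∈ v j
    rw [hqj]
    exact (hv j hj).2

lemma mem_of_isClosed_of_forall_finset {N : Set (Perm Ω)} (hN : IsClosed[permTopology Ω] N)
    {g : Perm Ω} (h : ∀ A : Finset Ω, ∃ n ∈ N, ∀ a ∈ A, n a = g a) : g ∈ N := by
  by_contra hg
  obtain ⟨A, hA⟩ := exists_finset_setOf_forall_apply_eq_subset hN.isOpen_compl hg
  obtain ⟨n, hn, hnA⟩ := h A
  exact hA hnA hn

lemma exists_isOpen_inter_eq_of_le {G H : Subgroup (Perm Ω)} {A : Finset Ω} (hHG : H ≤ G)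
    (hAH : G ⊓ fixSubgroup A ≤ H) :
    ∃ U : Set (Perm Ω), IsOpen[permTopology Ω] U ∧ (H : Set (Perm Ω)) = U ∩ G := by
  refine ⟨⋃ p ∈ H, {q : Perm Ω | ∀ a ∈ A, q a = p a},
    @isOpen_biUnion _ _ (permTopology Ω) _ _ fun p _ => isOpen_setOf_forall_apply_eq A p, ?_⟩
  ext q
  simp only [Set.mem_inter_iff, Set.mem_iUnion, Set.mem_ofPred_eq, SetLike.mem_coe]
  refine ⟨fun hq => ⟨⟨q, hq, fun _ _ => rfl⟩, hHG hq⟩, fun ⟨⟨p, hp, hpq⟩, hq⟩ => ?_⟩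
  have hfix : p⁻¹ * q ∈ G ⊓ fixSubgroup A := by
    refine ⟨G.mul_mem (G.inv_mem (hHG hp)) hq, fun a ha => ?_⟩
    simp [Perm.mul_apply, hpq a ha]
  simpa using H.mul_mem hp (hAH hfix)

end PermTopology

lemma finite_orbit_of_relIndex_ne_zero {K H : Subgroup (Perm Ω)} {x : Ω}
    (hK : K.relIndex H ≠ 0) (hKx : ∀ k ∈ K, k x = x) :
    {y | ∃ h ∈ H, h x = y}.Finite := by
  have hstab : K.subgroupOf H ≤ MulAction.stabilizer H x := fun k hk => hKx k hk
  have hidx : (MulAction.stabilizer H x).index ≠ 0 :=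
    ne_zero_of_dvd_ne_zero hK (Subgroup.index_dvd_of_le hstab)
  rw [MulAction.index_stabilizer] at hidx
  convert Set.finite_of_ncard_ne_zero hidx using 1
  ext y
  simp [MulAction.mem_orbit_iff, Perm.smul_def]

section Normal

variable {G N : Subgroup (Perm Ω)}

lemma exists_mem_apply_ne_of_ne_bot (hGN : G ≤ Subgroup.normalizer (N : Set (Perm Ω)))
    (htrans : ∀ a b : Ω, ∃ g ∈ G, g a = b) (hN : N ≠ ⊥) (β : Ω) : ∃ m ∈ N, m β ≠ β := by
  obtain ⟨m, hm, hm1⟩ : ∃ m ∈ N, m ≠ 1 := by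
    by_contra! h
    exact hN (N.eq_bot_iff_forall.2 h)
  obtain ⟨x, hx⟩ : ∃ x, m x ≠ x := by
    by_contra! h
    exact hm1 (Equiv.ext h)
  obtain ⟨g, hg, rfl⟩ := htrans β x
  have hconj : g⁻¹ * m * g ∈ N :=
    (Subgroup.mem_normalizer_iff.1 (hGN (G.inv_mem hg)) m).1 (by simpa using hm)
  refine ⟨g⁻¹ * m * g, hconj, fun h => hx ?_⟩
  rwa [Perm.mul_apply, Perm.mul_apply, Perm.inv_eq_iff_eq] at h

lemma infinite_orbit_of_apply_ne (hGN : G ≤ Subgroup.normalizer (N : Set (Perm Ω)))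
    {β : Ω} {m : Perm Ω} (hm : m ∈ N)
    (hnoalg : {x | ∃ g ∈ G ⊓ fixSubgroup {β}, g (m β) = x}.Infinite) :
    {y | ∃ n ∈ N, n β = y}.Infinite := by
  refine hnoalg.mono ?_
  rintro _ ⟨g, ⟨hgG, hgfix⟩, rfl⟩
  have hgβ : g β = β := hgfix β (Finset.mem_singleton_self β)
  refine ⟨g * m * g⁻¹, (Subgroup.mem_normalizer_iff.1 (hGN hgG) m).1 hm, ?_⟩
  simp [Perm.mul_apply, Perm.inv_eq_iff_eq.2 hgβ.symm]

lemma exists_mem_forall_apply_eq_of_wei (hGN : G ≤ Subgroup.normalizer (N : Set (Perm Ω)))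
    (hNG : N ≤ G)
    (hinf : ∀ β : Ω, {y | ∃ n ∈ N, n β = y}.Infinite)
    (hwei : ∀ V : Subgroup (Perm Ω), V ≤ G →
      (∃ U : Set (Perm Ω), IsOpen[permTopology Ω] U ∧ (V : Set (Perm Ω)) = U ∩ G) →
      ∃ A : Finset Ω, G ⊓ fixSubgroup A ≤ V ∧ (G ⊓ fixSubgroup A).relIndex V ≠ 0)
    (A : Finset Ω) {g : Perm Ω} (hg : g ∈ G) : ∃ n ∈ N, ∀ a ∈ A, n a = g a := by
  set H := N ⊔ (G ⊓ fixSubgroup A)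
  have hHG : H ≤ G := sup_le hNG inf_le_left
  obtain ⟨B, hBH, hBidx⟩ :=
    hwei H hHG (PermTopology.exists_isOpen_inter_eq_of_le hHG le_sup_right)
  have hB : B = ∅ := by
    by_contra hB
    obtain ⟨β, hβ⟩ := Finset.nonempty_iff_ne_empty.2 hB
    refine hinf β ((finite_orbit_of_relIndex_ne_zero hBidx fun k hk => hk.2 β hβ).subset ?_)
    rintro _ ⟨n, hn, rfl⟩
    exact ⟨n, le_sup_left (a := N) hn, rfl⟩
  have hgH : g ∈ (H : Set (Perm Ω)) := hBH ⟨hg, by simp [hB, fixSubgroup]⟩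
  rw [Subgroup.coe_mul_of_right_le_normalizer_left N _ (inf_le_left.trans hGN)] at hgH
  obtain ⟨n, hn, k, hk, rfl⟩ := hgH
  exact ⟨n, hn, fun a ha => by simp [Perm.mul_apply, hk.2 a ha]⟩

end Normal

end

theorem topologically_simple_of_noAlg_wei_general
    (Ω : Type*) (G : Subgroup (Equiv.Perm Ω))
    (htrans : ∀ a b : Ω, ∃ g ∈ G, g a = b)
    (hnoalg : ∀ (A : Finset Ω) (b : Ω), b ∉ A →
      {x : Ω | ∃ g ∈ G ⊓ fixSubgroup A, g b = x}.Infinite)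
    (hwei : ∀ V : Subgroup (Equiv.Perm Ω), V ≤ G →
      (∃ U : Set (Equiv.Perm Ω), IsOpen[permTopology Ω] U ∧ (V : Set (Equiv.Perm Ω)) = U ∩ G) →
      ∃ A : Finset Ω, G ⊓ fixSubgroup A ≤ V ∧ (G ⊓ fixSubgroup A).relIndex V ≠ 0) :
    ∀ N : Subgroup (Equiv.Perm Ω), N ≤ G →
      (∀ g ∈ G, ∀ n ∈ N, g * n * g⁻¹ ∈ N) →
      IsClosed[permTopology Ω] (N : Set (Equiv.Perm Ω)) →
      N = ⊥ ∨ N = G := by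
  intro N hNG hNnormal hNclosed
  refine or_iff_not_imp_left.2 fun hN => le_antisymm hNG fun g hg => ?_
  have hGN := Subgroup.le_normalizer_of_forall_conj_mem hNnormal
  have hinf : ∀ β : Ω, {y | ∃ n ∈ N, n β = y}.Infinite := fun β => by
    obtain ⟨m, hm, hmβ⟩ := exists_mem_apply_ne_of_ne_bot hGN htrans hN β
    exact infinite_orbit_of_apply_ne hGN hm (hnoalg {β} (m β) (by simpa using hmβ))
  exact PermTopology.mem_of_isClosed_of_forall_finset hNclosed
    (exists_mem_forall_apply_eq_of_wei hGN hNG hinf hwei · hg)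

/-- A transitive closed permutation group with no algebraicity and weak elimination of
imaginaries is topologically simple: every closed normal subgroup is trivial or everything. -/
theorem topologically_simple_of_noAlg_wei
    (Ω : Type*) [Countable Ω] [Infinite Ω] (G : Subgroup (Equiv.Perm Ω))
    (hGcl : IsClosed[permTopology Ω] (G : Set (Equiv.Perm Ω)))
    (htrans : ∀ a b : Ω, ∃ g ∈ G, g a = b)
    (hnoalg : ∀ (A : Finset Ω) (b : Ω), b ∉ A →
      {x : Ω | ∃ g ∈ G ⊓ fixSubgroup A, g b = x}.Infinite)
    (hwei : ∀ V : Subgroup (Equiv.Perm Ω), V ≤ G →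
      (∃ U : Set (Equiv.Perm Ω), IsOpen[permTopology Ω] U ∧ (V : Set (Equiv.Perm Ω)) = U ∩ G) →
      ∃ A : Finset Ω, G ⊓ fixSubgroup A ≤ V ∧ (G ⊓ fixSubgroup A).relIndex V ≠ 0) :
    ∀ N : Subgroup (Equiv.Perm Ω), N ≤ G →
      (∀ g ∈ G, ∀ n ∈ N, g * n * g⁻¹ ∈ N) →
      IsClosed[permTopology Ω] (N : Set (Equiv.Perm Ω)) →
      N = ⊥ ∨ N = G :=
  topologically_simple_of_noAlg_wei_general Ω G htrans hnoalg hwei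
end

section
/- Let (G,B) be a topological bornological group with the Howe-Moore property and let U be a proper open subgroup of G. Then U is bounded, i.e. U ∈ B. -/
open scoped Pointwise

universe u

/-- A group bornology on a group `G`: a collection of subsets containing singletons and
closed under subsets, inverses, finite unions and products. -/
structure GroupBornology (G : Type u) [Group G] where
  sets : Set (Set G)
  singleton_mem : ∀ g : G, {g} ∈ sets
  subset_mem : ∀ A ∈ sets, ∀ B ⊆ A, B ∈ sets
  inv_mem : ∀ A ∈ sets, A⁻¹ ∈ sets
  union_mem : ∀ A ∈ sets, ∀ B ∈ sets, A ∪ B ∈ sets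
  mul_mem : ∀ A ∈ sets, ∀ B ∈ sets, A * B ∈ sets

/-- A subset of a topological group is coarsely bounded if it has finite diameter for every
continuous left-invariant pseudometric. -/
def CoarselyBounded {G : Type u} [Group G] [TopologicalSpace G] (A : Set G) : Prop :=
  ∀ d : G → G → ℝ, Continuous (fun p : G × G => d p.1 p.2) →
    (∀ x, d x x = 0) → (∀ x y, d x y = d y x) →
    (∀ x y z, d x z ≤ d x y + d y z) →
    (∀ g x y, d (g * x) (g * y) = d x y) →
    ∃ C : ℝ, ∀ x ∈ A, ∀ y ∈ A, d x y ≤ C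

/-!
If `U` is a proper open subgroup, `G` acts continuously on the discrete set `G ⧸ U`, so the
quasi-regular representation on `ℓ²(G ⧸ U)` is continuous. Restricted to the orthogonal complement
of its invariant vectors it has no invariant vectors, and that complement contains
`ξ = δ_U - δ_{g₀U}` for any `g₀ ∉ U`, since invariant functions are constant on the transitive
`G`-set `G ⧸ U`. For `g ∈ U` the matrix coefficient `⟪π g ξ, ξ⟫` equals `1` or `2`, so the bounded
set outside which it has modulus `< 1` contains `U`.
-/

open scoped InnerProductSpace Topology

theorem isClosed_setOf_continuous_apply {X β γ : Type*} [TopologicalSpace X]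
    [PseudoMetricSpace β] [PseudoMetricSpace γ] {F : X → β → γ}
    (hF : ∀ x, LipschitzWith 1 (F x)) : IsClosed {b | Continuous fun x => F x b} := by
  have hequi : Equicontinuous F :=
    Metric.equicontinuous_of_continuity_modulus id Filter.tendsto_id F
      fun b b' x => by simpa using (hF x).dist_le_mul b b'
  have hset : {b | Continuous fun x => F x b} =
      ⋂ x₀, {b | Filter.Tendsto (F · b) (𝓝 x₀) (𝓝 (F x₀ b))} := by
    ext b
    simp only [Set.mem_ofPred_eq, Set.mem_iInter, continuous_iff_continuousAt, ContinuousAt]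
  rw [hset]
  exact isClosed_iInter fun x₀ => hequi.isClosed_setOfPred_tendsto (hF x₀).continuous

section Invariants

variable {G 𝕜 K : Type*} [Group G] [RCLike 𝕜] [NormedAddCommGroup K] [InnerProductSpace 𝕜 K]

def invariantSubspace (π : G →* (K ≃ₗᵢ[𝕜] K)) : Submodule 𝕜 K where
  carrier := {ξ | ∀ g, π g ξ = ξ}
  add_mem' hξ hη g := by rw [map_add, hξ g, hη g]
  zero_mem' g := map_zero (π g)
  smul_mem' c ξ hξ g := by rw [map_smul, hξ g]

theorem apply_mem_orthogonal_invariantSubspace (π : G →* (K ≃ₗᵢ[𝕜] K)) (g : G) {v : K}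
    (hv : v ∈ (invariantSubspace π)ᗮ) : π g v ∈ (invariantSubspace π)ᗮ := by
  rw [Submodule.mem_orthogonal] at hv ⊢
  intro u hu
  rw [← hu g, (π g).inner_map_map]
  exact hv u hu

def restrictRep (π : G →* (K ≃ₗᵢ[𝕜] K)) (W : Submodule 𝕜 K) (hW : ∀ g, ∀ v ∈ W, π g v ∈ W) :
    G →* (W ≃ₗᵢ[𝕜] W) where
  toFun g :=
    { toFun v := ⟨π g v, hW g v v.2⟩
      invFun v := ⟨π g⁻¹ v, hW g⁻¹ v v.2⟩
      map_add' u v := Subtype.ext (map_add (π g) (u : K) v)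
      map_smul' c v := Subtype.ext (map_smul (π g) c (v : K))
      left_inv v := Subtype.ext (by simp [map_inv, LinearIsometryEquiv.coe_inv])
      right_inv v := Subtype.ext (by simp [map_inv, LinearIsometryEquiv.coe_inv])
      norm_map' v := (π g).norm_map v }
  map_one' := LinearIsometryEquiv.ext fun v => Subtype.ext (by simp)
  map_mul' g h := LinearIsometryEquiv.ext fun v => Subtype.ext (by simp)

def orthogonalInvariantsRep (π : G →* (K ≃ₗᵢ[𝕜] K)) :
    G →* ((invariantSubspace π)ᗮ ≃ₗᵢ[𝕜] (invariantSubspace π)ᗮ) :=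
  restrictRep π _ fun g _ => apply_mem_orthogonal_invariantSubspace π g

theorem orthogonalInvariantsRep_no_invariant (π : G →* (K ≃ₗᵢ[𝕜] K)) :
    ¬ ∃ ξ : (invariantSubspace π)ᗮ, ξ ≠ 0 ∧ ∀ g, orthogonalInvariantsRep π g ξ = ξ := by
  rintro ⟨ξ, hξ0, hξ⟩
  have hmem : (ξ : K) ∈ invariantSubspace π := fun g => congrArg Subtype.val (hξ g)
  exact hξ0 (Subtype.ext ((Submodule.mem_bot 𝕜).1
    ((invariantSubspace π).inf_orthogonal_eq_bot ▸ ⟨hmem, ξ.2⟩)))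

theorem continuous_orthogonalInvariantsRep_apply [TopologicalSpace G] {π : G →* (K ≃ₗᵢ[𝕜] K)}
    (hπ : ∀ v, Continuous fun g => π g v) (v : (invariantSubspace π)ᗮ) :
    Continuous fun g => orthogonalInvariantsRep π g v :=
  (hπ v).subtype_mk _

end Invariants

section QuasiRegular

variable {G 𝕜 α : Type*} [RCLike 𝕜]

local notation "ℓ²(" α ", " 𝕜 ")" => lp (fun _ : α => 𝕜) 2

theorem memℓp_two_comp_equiv (f : ℓ²(α, 𝕜)) (e : α ≃ α) : Memℓp (f ∘ e) 2 := by
  have hf := (memℓp_gen_iff (by norm_num : 0 < (2 : ENNReal).toReal)).1 f.2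
  exact memℓp_gen ((e.summable_iff (f := fun x => ‖f x‖ ^ (2 : ENNReal).toReal)).2 hf)

variable (G 𝕜 α) [Group G] [MulAction G α]

def quasiRegular : G →* (ℓ²(α, 𝕜) ≃ₗᵢ[𝕜] ℓ²(α, 𝕜)) where
  toFun g :=
    { toFun f := ⟨fun x => f (g⁻¹ • x), memℓp_two_comp_equiv f (MulAction.toPerm g⁻¹)⟩
      invFun f := ⟨fun x => f (g • x), memℓp_two_comp_equiv f (MulAction.toPerm g)⟩
      map_add' _ _ := rfl
      map_smul' _ _ := rfl
      left_inv f := lp.ext (funext fun x => by simp)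
      right_inv f := lp.ext (funext fun x => by simp)
      norm_map' f := by
        simp only [lp.norm_eq_tsum_rpow (by norm_num : 0 < (2 : ENNReal).toReal)]
        congr 1
        exact (MulAction.toPerm g⁻¹ : Equiv.Perm α).tsum_eq
          (fun x => ‖f x‖ ^ (2 : ENNReal).toReal) }
  map_one' := LinearIsometryEquiv.ext fun f => lp.ext (funext fun x => by simp)
  map_mul' g h := LinearIsometryEquiv.ext fun f => lp.ext (funext fun x => by
    show f _ = f _
    rw [mul_inv_rev, mul_smul])

variable {G 𝕜 α}

@[simp]
theorem quasiRegular_apply (g : G) (f : ℓ²(α, 𝕜)) (x : α) :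
    quasiRegular G 𝕜 α g f x = f (g⁻¹ • x) := rfl

theorem quasiRegular_single [DecidableEq α] (g : G) (x : α) (a : 𝕜) :
    quasiRegular G 𝕜 α g (lp.single 2 x a) = lp.single 2 (g • x) a := by
  ext y
  simp [Pi.single_apply, inv_smul_eq_iff]

theorem continuous_quasiRegular_apply [TopologicalSpace G] [TopologicalSpace α]
    [DiscreteTopology α] [ContinuousSMul G α] (f : ℓ²(α, 𝕜)) :
    Continuous fun g => quasiRegular G 𝕜 α g f := by
  classical
  have hclosed : IsClosed {f : ℓ²(α, 𝕜) | Continuous fun g => quasiRegular G 𝕜 α g f} :=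
    isClosed_setOf_continuous_apply fun g => (quasiRegular G 𝕜 α g).isometry.lipschitz
  have hsum (s : Finset α) :
      Continuous fun g => quasiRegular G 𝕜 α g (∑ x ∈ s, lp.single 2 x (f x)) := by
    simp only [map_sum, quasiRegular_single]
    exact continuous_finsetSum s fun x _ =>
      (continuous_of_discreteTopology (f := fun y => lp.single 2 y (f x))).comp
        (continuous_id.smul continuous_const)
  exact hclosed.mem_of_tendsto (lp.hasSum_single (by norm_num) f)
    (Filter.Eventually.of_forall hsum)

theorem apply_eq_apply_of_mem_invariantSubspace [MulAction.IsPretransitive G α]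
    {f : ℓ²(α, 𝕜)} (hf : f ∈ invariantSubspace (quasiRegular G 𝕜 α)) (x y : α) : f x = f y := by
  obtain ⟨g, rfl⟩ := MulAction.exists_smul_eq G y x
  have h := congrArg (fun f : ℓ²(α, 𝕜) => f (g • y)) (hf g)
  simp only [quasiRegular_apply, inv_smul_smul] at h
  exact h.symm

theorem single_sub_single_mem_orthogonal_invariantSubspace [MulAction.IsPretransitive G α]
    [DecidableEq α] (x y : α) (a : 𝕜) :
    lp.single 2 x a - lp.single 2 y a ∈ (invariantSubspace (quasiRegular G 𝕜 α))ᗮ := by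
  rw [Submodule.mem_orthogonal]
  intro f hf
  rw [inner_sub_right, lp.inner_single_right, lp.inner_single_right,
    apply_eq_apply_of_mem_invariantSubspace hf x y, sub_self]

theorem one_le_norm_inner_quasiRegular_single_sub_single [DecidableEq α] {x y : α} (hxy : x ≠ y)
    {g : G} (hg : g • x = x) :
    1 ≤ ‖⟪quasiRegular G 𝕜 α g (lp.single 2 x 1 - lp.single 2 y 1),
      lp.single 2 x 1 - lp.single 2 y 1⟫_𝕜‖ := by
  have hgy : g • y ≠ x := fun h => hxy ((smul_left_cancel_iff g).1 (h.trans hg.symm)).symm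
  have hinner : ⟪(lp.single 2 x 1 - lp.single 2 (g • y) 1 : ℓ²(α, 𝕜)),
      lp.single 2 x 1 - lp.single 2 y 1⟫_𝕜 = 1 + (lp.single 2 y 1 : ℓ²(α, 𝕜)) (g • y) := by
    simp [inner_sub_left, lp.inner_single_left, lp.single_apply, hxy, hgy]
  rw [map_sub, quasiRegular_single, quasiRegular_single, hg, hinner]
  by_cases hgy' : g • y = y
  · rw [hgy', lp.single_apply_self]
    norm_num
  · rw [lp.single_apply_ne _ _ _ hgy']
    simp

end QuasiRegular

theorem proper_open_subgroup_bounded_of_howeMoore_general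
    {G : Type u} [Group G] [TopologicalSpace G] [IsTopologicalGroup G]
    (B : GroupBornology G)
    (howeMoore : ∀ (K : Type u) (_ : NormedAddCommGroup K), ∀ (_ : InnerProductSpace ℂ K),
      ∀ (_ : CompleteSpace K), ∀ π : G →* (K ≃ₗᵢ[ℂ] K),
      (∀ ξ : K, Continuous fun g => π g ξ) →
      (¬ ∃ ξ : K, ξ ≠ 0 ∧ ∀ g : G, π g ξ = ξ) →
      ∀ ξ η : K, ∀ ε > (0 : ℝ), ∃ B₀ ∈ B.sets, ∀ g ∉ B₀, ‖(inner ℂ (π g ξ) η : ℂ)‖ < ε)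
    (U : Subgroup G) (hUopen : IsOpen (U : Set G)) (hUproper : U ≠ ⊤) :
    (U : Set G) ∈ B.sets := by
  classical
  have := QuotientGroup.discreteTopology hUopen
  obtain ⟨g₀, hg₀⟩ := SetLike.exists_not_mem_of_ne_top U hUproper
  set x₀ : G ⧸ U := ((1 : G) : G ⧸ U)
  have hstab (g : G) : g • x₀ = x₀ ↔ g ∈ U := by
    rw [← MulAction.mem_stabilizer_iff, MulAction.stabilizer_quotient]
  have hx₀ : x₀ ≠ g₀ • x₀ := fun h => hg₀ ((hstab g₀).1 h.symm)
  let π := quasiRegular G ℂ (G ⧸ U)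
  let ξ : (invariantSubspace π)ᗮ :=
    ⟨lp.single 2 x₀ 1 - lp.single 2 (g₀ • x₀) 1,
      single_sub_single_mem_orthogonal_invariantSubspace x₀ (g₀ • x₀) 1⟩
  obtain ⟨B₀, hB₀, hsmall⟩ := howeMoore _ inferInstance inferInstance inferInstance
    (orthogonalInvariantsRep π)
    (continuous_orthogonalInvariantsRep_apply continuous_quasiRegular_apply)
    (orthogonalInvariantsRep_no_invariant π) ξ ξ 1 one_pos
  refine B.subset_mem B₀ hB₀ _ fun g hg => ?_
  by_contra hgB
  exact (hsmall g hgB).not_ge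
    (one_le_norm_inner_quasiRegular_single_sub_single hx₀ ((hstab g).2 hg))

/-- If a topological bornological group `(G, B)` has the Howe–Moore property, then every
proper open subgroup of `G` is bounded. -/
theorem proper_open_subgroup_bounded_of_howeMoore
    {G : Type u} [Group G] [TopologicalSpace G] [IsTopologicalGroup G]
    (B : GroupBornology G)
    (hCB : ∀ A ∈ B.sets, CoarselyBounded A)
    (howeMoore : ∀ (K : Type u) (_ : NormedAddCommGroup K), ∀ (_ : InnerProductSpace ℂ K),
      ∀ (_ : CompleteSpace K), ∀ π : G →* (K ≃ₗᵢ[ℂ] K),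
      (∀ ξ : K, Continuous fun g => π g ξ) →
      (¬ ∃ ξ : K, ξ ≠ 0 ∧ ∀ g : G, π g ξ = ξ) →
      ∀ ξ η : K, ∀ ε > (0 : ℝ), ∃ B₀ ∈ B.sets, ∀ g ∉ B₀, ‖(inner ℂ (π g ξ) η : ℂ)‖ < ε)
    (U : Subgroup G) (hUopen : IsOpen (U : Set G)) (hUproper : U ≠ ⊤) :
    (U : Set G) ∈ B.sets :=
  proper_open_subgroup_bounded_of_howeMoore_general B howeMoore U hUopen hUproper
end

section
/- Let p ≥ 1 be an integer. Let (X₁,d₁) and (X₂,d₂) be integral metric spaces with no triangle of odd perimeter at most p, agreeing on the non-empty intersection Y = X₁ ∩ X₂. Then the metric amalgam of X₁ and X₂ over Y contains no triangle of odd perimeter at most p. -/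
/-- An `ℕ`-valued function `d` has no triangle of odd perimeter at most `p` on a set `S`. -/
def NoOddTriangle {α : Type*} (d : α → α → ℕ) (S : Set α) (p : ℕ) : Prop :=
  ∀ x ∈ S, ∀ y ∈ S, ∀ z ∈ S, Odd (d x y + d y z + d z x) → p < d x y + d y z + d z x

/-- Key case: two points in `A`, one in `B \ A`. -/
lemma amalgam_key {α : Type*} (p : ℕ) (A B : Set α) (d : α → α → ℕ)
    (hY : (A ∩ B).Nonempty)
    (hsymm : ∀ x ∈ A ∪ B, ∀ y ∈ A ∪ B, d x y = d y x)
    (hzero : ∀ x ∈ A ∪ B, d x x = 0)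
    (htri : ∀ x ∈ A ∪ B, ∀ y ∈ A ∪ B, ∀ z ∈ A ∪ B, d x z ≤ d x y + d y z)
    (h₁ : NoOddTriangle d A p) (h₂ : NoOddTriangle d B p)
    (hcross : ∀ u ∈ A \ B, ∀ v ∈ B \ A,
      d u v = sInf {m : ℕ | ∃ w ∈ A ∩ B, m = d u w + d w v})
    (x y z : α) (hx : x ∈ A) (hy : y ∈ A) (hz : z ∈ B \ A)
    (hodd : (d x y + d y z + d z x) % 2 = 1) : p < d x y + d y z + d z x := by
  obtain ⟨zB, zA⟩ := hz
  -- find a gate for x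
  have hgate : ∀ u ∈ A, ∃ w ∈ A ∩ B, d u z = d u w + d w z := by
    intro u hu
    by_cases huB : u ∈ B
    · exact ⟨u, ⟨hu, huB⟩, by rw [hzero u (Or.inl hu)]; omega⟩
    · have h := hcross u ⟨hu, huB⟩ z ⟨zB, zA⟩
      have hne : {m : ℕ | ∃ w ∈ A ∩ B, m = d u w + d w z}.Nonempty := by
        obtain ⟨w0, hw0⟩ := hY
        exact ⟨d u w0 + d w0 z, w0, hw0, rfl⟩
      have hmem := Nat.sInf_mem hne
      rw [← h] at hmem
      exact hmem
  obtain ⟨a, ⟨haA, haB⟩, hxz⟩ := hgate x hx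
  obtain ⟨b, ⟨hbA, hbB⟩, hyz⟩ := hgate y hy
  -- symmetry facts
  have s1 : d z x = d x z := hsymm z (Or.inr zB) x (Or.inl hx)
  have s2 : d x a = d a x := hsymm x (Or.inl hx) a (Or.inl haA)
  have s3 : d z a = d a z := hsymm z (Or.inr zB) a (Or.inl haA)
  have s4 : d b x = d x b := hsymm b (Or.inl hbA) x (Or.inl hx)
  have s5 : d b a = d a b := hsymm b (Or.inl hbA) a (Or.inl haA)
  -- triangle inequalities
  have i1 : d a b ≤ d a x + d x b :=
    htri a (Or.inl haA) x (Or.inl hx) b (Or.inl hbA)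
  have i2 : d x b ≤ d x y + d y b :=
    htri x (Or.inl hx) y (Or.inl hy) b (Or.inl hbA)
  have i3 : d b x ≤ d b z + d z x :=
    htri b (Or.inl hbA) z (Or.inr zB) x (Or.inl hx)
  have i4 : d b a ≤ d b z + d z a :=
    htri b (Or.inl hbA) z (Or.inr zB) a (Or.inl haA)
  -- one of the three triangles has odd perimeter
  rcases (by omega :
      (d a b + d b z + d z a) % 2 = 1 ∨ (d x y + d y b + d b x) % 2 = 1 ∨
        (d x b + d b a + d a x) % 2 = 1) with h | h | h
  · have hgt := h₂ a haB b hbB z zB (Nat.odd_iff.mpr h)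
    omega
  · have hgt := h₁ x hx y hy b hbA (Nat.odd_iff.mpr h)
    omega
  · have hgt := h₁ x hx b hbA a haA (Nat.odd_iff.mpr h)
    omega

/-- The metric amalgam of two integral metric spaces with no triangle of odd perimeter at
most `p` over their non-empty intersection has no triangle of odd perimeter at most `p`. -/
theorem amalgam_noOddTriangle {α : Type*} (p : ℕ) (hp : 1 ≤ p)
    (X₁ X₂ : Set α) (d : α → α → ℕ)
    (hY : (X₁ ∩ X₂).Nonempty)
    -- `d` is a metric on `X₁ ∪ X₂`:
    (hsymm : ∀ x ∈ X₁ ∪ X₂, ∀ y ∈ X₁ ∪ X₂, d x y = d y x)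
    (hzero : ∀ x ∈ X₁ ∪ X₂, ∀ y ∈ X₁ ∪ X₂, (d x y = 0 ↔ x = y))
    (htri : ∀ x ∈ X₁ ∪ X₂, ∀ y ∈ X₁ ∪ X₂, ∀ z ∈ X₁ ∪ X₂, d x z ≤ d x y + d y z)
    -- `X₁` and `X₂` have no triangle of odd perimeter at most `p`:
    (h₁ : NoOddTriangle d X₁ p) (h₂ : NoOddTriangle d X₂ p)
    -- cross distances are given by the amalgamation formula over `Y = X₁ ∩ X₂`:
    (hcross : ∀ x₁ ∈ X₁ \ X₂, ∀ x₂ ∈ X₂ \ X₁,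
      d x₁ x₂ = sInf {m : ℕ | ∃ y ∈ X₁ ∩ X₂, m = d x₁ y + d y x₂}) :
    NoOddTriangle d (X₁ ∪ X₂) p := by
  have hzero' : ∀ x ∈ X₁ ∪ X₂, d x x = 0 := fun x hx => (hzero x hx x hx).mpr rfl
  -- swapped versions
  have hY' : (X₂ ∩ X₁).Nonempty := by rwa [Set.inter_comm]
  have hU : X₂ ∪ X₁ = X₁ ∪ X₂ := Set.union_comm _ _
  have hsymm' : ∀ x ∈ X₂ ∪ X₁, ∀ y ∈ X₂ ∪ X₁, d x y = d y x := by rw [hU]; exact hsymm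
  have hzero'' : ∀ x ∈ X₂ ∪ X₁, d x x = 0 := by rw [hU]; exact hzero'
  have htri' : ∀ x ∈ X₂ ∪ X₁, ∀ y ∈ X₂ ∪ X₁, ∀ z ∈ X₂ ∪ X₁, d x z ≤ d x y + d y z := by
    rw [hU]; exact htri
  have hcross' : ∀ u ∈ X₂ \ X₁, ∀ v ∈ X₁ \ X₂,
      d u v = sInf {m : ℕ | ∃ w ∈ X₂ ∩ X₁, m = d u w + d w v} := by
    intro u hu v hv
    have e1 : d u v = d v u := hsymm u (Or.inr hu.1) v (Or.inl hv.1)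
    have e2 : {m : ℕ | ∃ w ∈ X₂ ∩ X₁, m = d u w + d w v} =
        {m : ℕ | ∃ w ∈ X₁ ∩ X₂, m = d v w + d w u} := by
      ext m
      constructor
      · rintro ⟨w, ⟨hw2, hw1⟩, rfl⟩
        refine ⟨w, ⟨hw1, hw2⟩, ?_⟩
        rw [hsymm u (Or.inr hu.1) w (Or.inl hw1), hsymm w (Or.inl hw1) v (Or.inl hv.1)]
        ring
      · rintro ⟨w, ⟨hw1, hw2⟩, rfl⟩
        refine ⟨w, ⟨hw2, hw1⟩, ?_⟩
        rw [hsymm v (Or.inl hv.1) w (Or.inl hw1), hsymm w (Or.inl hw1) u (Or.inr hu.1)]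
        ring
    rw [e1, e2]
    exact hcross v hv u hu
  intro x hxU y hyU z hzU hodd
  rw [Nat.odd_iff] at hodd
  have key₁ := amalgam_key p X₁ X₂ d hY hsymm hzero' htri h₁ h₂ hcross
  have key₂ := amalgam_key p X₂ X₁ d hY' hsymm' hzero'' htri' h₂ h₁ hcross'
  by_cases hx1 : x ∈ X₁ <;> by_cases hy1 : y ∈ X₁ <;> by_cases hz1 : z ∈ X₁
  · exact h₁ x hx1 y hy1 z hz1 (Nat.odd_iff.mpr hodd)
  · -- x,y ∈ X₁, z ∈ X₂ \ X₁
    have hz2 : z ∈ X₂ \ X₁ := ⟨hzU.resolve_left hz1, hz1⟩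
    exact key₁ x y z hx1 hy1 hz2 hodd
  · -- x,z ∈ X₁, y ∈ X₂ \ X₁
    have hy2 : y ∈ X₂ \ X₁ := ⟨hyU.resolve_left hy1, hy1⟩
    have := key₁ z x y hz1 hx1 hy2 (by omega)
    omega
  · -- x ∈ X₁, y,z ∈ X₂ \ X₁
    have hy2 : y ∈ X₂ := hyU.resolve_left hy1
    have hz2 : z ∈ X₂ := hzU.resolve_left hz1
    by_cases hx2 : x ∈ X₂
    · exact h₂ x hx2 y hy2 z hz2 (Nat.odd_iff.mpr hodd)
    · have := key₂ y z x hy2 hz2 ⟨hx1, hx2⟩ (by omega)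
      omega
  · -- y,z ∈ X₁, x ∈ X₂ \ X₁
    have hx2 : x ∈ X₂ \ X₁ := ⟨hxU.resolve_left hx1, hx1⟩
    have := key₁ y z x hy1 hz1 hx2 (by omega)
    omega
  · -- y ∈ X₁, x,z ∈ X₂ \ X₁
    have hx2 : x ∈ X₂ := hxU.resolve_left hx1
    have hz2 : z ∈ X₂ := hzU.resolve_left hz1
    by_cases hy2 : y ∈ X₂
    · exact h₂ x hx2 y hy2 z hz2 (Nat.odd_iff.mpr hodd)
    · have := key₂ z x y hz2 hx2 ⟨hy1, hy2⟩ (by omega)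
      omega
  · -- z ∈ X₁, x,y ∈ X₂ \ X₁
    have hx2 : x ∈ X₂ := hxU.resolve_left hx1
    have hy2 : y ∈ X₂ := hyU.resolve_left hy1
    by_cases hz2 : z ∈ X₂
    · exact h₂ x hx2 y hy2 z hz2 (Nat.odd_iff.mpr hodd)
    · have := key₂ x y z hx2 hy2 ⟨hz1, hz2⟩ (by omega)
      omega
  · -- all in X₂
    exact h₂ x (hxU.resolve_left hx1) y (hyU.resolve_left hy1) z (hzU.resolve_left hz1)
      (Nat.odd_iff.mpr hodd)
end

section
/- Let r ≥ 3 be an integer. Let (X₁,d₁) and (X₂,d₂) be integral metric spaces containing no set of r points mutually at distance 1, agreeing on the non-empty intersection Y = X₁ ∩ X₂. Then the metric amalgam of X₁ and X₂ over Y contains no set of r points mutually at distance 1. -/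
/-- The set `S` contains no unit `(r-1)`-simplex for `d`: no `r` points of `S` lie mutually
at distance `1`. -/
def NoUnitSimplex {α : Type*} (d : α → α → ℕ) (S : Set α) (r : ℕ) : Prop :=
  ¬ ∃ F : Finset α, ↑F ⊆ S ∧ F.card = r ∧ ∀ x ∈ F, ∀ y ∈ F, x ≠ y → d x y = 1

/-- The metric amalgam of two integral metric spaces containing no `r` points mutually at
distance `1`, over their non-empty intersection, contains no `r` points mutually at
distance `1`. -/
theorem amalgam_noUnitSimplex {α : Type*} (r : ℕ) (hr : 3 ≤ r)
    (X₁ X₂ : Set α) (d : α → α → ℕ)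
    (hY : (X₁ ∩ X₂).Nonempty)
    -- `d` is a metric on `X₁ ∪ X₂`:
    (hsymm : ∀ x ∈ X₁ ∪ X₂, ∀ y ∈ X₁ ∪ X₂, d x y = d y x)
    (hzero : ∀ x ∈ X₁ ∪ X₂, ∀ y ∈ X₁ ∪ X₂, (d x y = 0 ↔ x = y))
    (htri : ∀ x ∈ X₁ ∪ X₂, ∀ y ∈ X₁ ∪ X₂, ∀ z ∈ X₁ ∪ X₂, d x z ≤ d x y + d y z)
    -- `X₁` and `X₂` contain no unit `(r-1)`-simplex:
    (h₁ : NoUnitSimplex d X₁ r) (h₂ : NoUnitSimplex d X₂ r)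
    -- cross distances are given by the amalgamation formula over `Y = X₁ ∩ X₂`:
    (hcross : ∀ x₁ ∈ X₁ \ X₂, ∀ x₂ ∈ X₂ \ X₁,
      d x₁ x₂ = sInf {m : ℕ | ∃ y ∈ X₁ ∩ X₂, m = d x₁ y + d y x₂}) :
    NoUnitSimplex d (X₁ ∪ X₂) r := by
  rintro ⟨F, hFsub, hFcard, hFunit⟩
  -- key claim: F ⊆ X₁ or F ⊆ X₂
  by_cases hc1 : ∀ x ∈ F, x ∈ X₁
  · exact h₁ ⟨F, fun x hx => hc1 x hx, hFcard, hFunit⟩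
  by_cases hc2 : ∀ x ∈ F, x ∈ X₂
  · exact h₂ ⟨F, fun x hx => hc2 x hx, hFcard, hFunit⟩
  push_neg at hc1 hc2
  obtain ⟨x₂, hx₂F, hx₂⟩ := hc1
  obtain ⟨x₁, hx₁F, hx₁⟩ := hc2
  have hx₁X : x₁ ∈ X₁ := by
    rcases hFsub hx₁F with h | h
    · exact h
    · exact absurd h hx₁
  have hx₂X : x₂ ∈ X₂ := by
    rcases hFsub hx₂F with h | h
    · exact absurd h hx₂
    · exact h
  have hne : x₁ ≠ x₂ := fun h => hx₁ (h ▸ hx₂X)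
  have hd1 : d x₁ x₂ = 1 := hFunit x₁ hx₁F x₂ hx₂F hne
  have hset : {m : ℕ | ∃ y ∈ X₁ ∩ X₂, m = d x₁ y + d y x₂}.Nonempty := by
    obtain ⟨y, hy⟩ := hY
    exact ⟨d x₁ y + d y x₂, y, hy, rfl⟩
  have hcr := hcross x₁ ⟨hx₁X, hx₁⟩ x₂ ⟨hx₂X, hx₂⟩
  have hmem := Nat.sInf_mem hset
  rw [← hcr, hd1] at hmem
  obtain ⟨y, ⟨hyX₁, hyX₂⟩, hy⟩ := hmem
  have hyU : y ∈ X₁ ∪ X₂ := Or.inl hyX₁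
  have hx₁U : x₁ ∈ X₁ ∪ X₂ := Or.inl hx₁X
  have hx₂U : x₂ ∈ X₁ ∪ X₂ := Or.inr hx₂X
  have h01 : d x₁ y = 0 ∨ d y x₂ = 0 := by omega
  rcases h01 with h0 | h0
  · have : x₁ = y := (hzero x₁ hx₁U y hyU).mp h0
    exact hx₁ (this ▸ hyX₂)
  · have : y = x₂ := (hzero y hyU x₂ hx₂U).mp h0
    exact hx₂ (this ▸ hyX₁)
end
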